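/- For all integers a ≥ 1, b ≥ 0 with a + b ≤ k and a < k, where k ≥ 2, one has (a+b)! ≤ ((k+1)!/(2k-3)) · (2a + b - 1). -/
import Mathlib


/-- For all integers `a ≥ 1`, `b ≥ 0` with `a + b ≤ k` and `a < k`, where
`k ≥ 2`, one has `(a+b)! ≤ ((k+1)!/(2k-3)) * (2a + b - 1)` (over `ℚ`). -/
theorem factorial_weight_estimate (k a b : ℕ) (hk : 2 ≤ k) (ha : 1 ≤ a)
    (hab : a + b ≤ k) (hak : a < k) :
    ((Nat.factorial (a + b) : ℚ)) ≤
      ((Nat.factorial (k + 1) : ℚ) / (2 * (k : ℚ) - 3)) *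
        (2 * (a : ℚ) + (b : ℚ) - 1) := by
  have hkQ : (2 : ℚ) ≤ (k : ℚ) := by exact_mod_cast hk
  have h3 : (0 : ℚ) < 2 * (k : ℚ) - 3 := by linarith
  rw [div_mul_eq_mul_div, le_div_iff₀ h3]
  obtain ⟨m, rfl⟩ : ∃ m, k = m + 2 := ⟨k - 2, by omega⟩
  have key : Nat.factorial (a + b) * (2 * (m + 2) - 3) ≤
      Nat.factorial (m + 2 + 1) * (2 * a + b - 1) := by
    rcases Nat.lt_or_ge (a + b) (m + 2) with h | h
    · have h1 : Nat.factorial (a + b) ≤ Nat.factorial (m + 1) :=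
        Nat.factorial_le (by omega)
      have h2 : Nat.factorial (m + 2 + 1) = (m + 3) * ((m + 2) * Nat.factorial (m + 1)) := by
        rw [Nat.factorial_succ, Nat.factorial_succ]
      have hw : 1 ≤ 2 * a + b - 1 := by omega
      calc Nat.factorial (a + b) * (2 * (m + 2) - 3)
          ≤ Nat.factorial (m + 1) * ((m + 3) * (m + 2)) := by
            apply Nat.mul_le_mul h1
            have hs : 2 * (m + 2) - 3 = 2 * m + 1 := by omega
            rw [hs]; nlinarith
        _ ≤ Nat.factorial (m + 2 + 1) * (2 * a + b - 1) := by
            rw [h2]; nlinarith [Nat.one_le_iff_ne_zero.mpr (Nat.factorial_ne_zero (m+1))]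
    · have hab2 : a + b = m + 2 := by omega
      have hb : 1 ≤ b := by omega
      have hw : m + 2 ≤ 2 * a + b - 1 := by omega
      rw [hab2, Nat.factorial_succ]
      calc Nat.factorial (m + 2) * (2 * (m + 2) - 3)
          ≤ Nat.factorial (m + 2) * ((m + 3) * (m + 2)) := by
            apply Nat.mul_le_mul_left
            have hs : 2 * (m + 2) - 3 = 2 * m + 1 := by omega
            rw [hs]; nlinarith
        _ = (m + 3) * Nat.factorial (m + 2) * (m + 2) := by ring
        _ ≤ (m + 2 + 1) * Nat.factorial (m + 2) * (2 * a + b - 1) := by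
            exact Nat.mul_le_mul (le_of_eq (by ring)) hw
  have keyQ : ((Nat.factorial (a + b) * (2 * (m + 2) - 3) : ℕ) : ℚ) ≤
      ((Nat.factorial (m + 2 + 1) * (2 * a + b - 1) : ℕ) : ℚ) := by exact_mod_cast key
  have c1 : ((2 * (m + 2) - 3 : ℕ) : ℚ) = 2 * ((m + 2 : ℕ) : ℚ) - 3 := by
    rw [Nat.cast_sub (by omega)]; push_cast; ring
  have c2 : ((2 * a + b - 1 : ℕ) : ℚ) = 2 * (a : ℚ) + (b : ℚ) - 1 := by
    rw [Nat.cast_sub (by omega)]; push_cast; ring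
  push_cast [c1, c2] at keyQ
  push_cast
  linarith
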